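/- arXiv:2007.13811 — 6 statements merged into one kernel-verified Lean document; each statement's English description precedes it below -/
import Mathlib

section
/- The characteristic polynomial of the Jacobian of the SEIHRD system at an equilibrium (I = E = H = 0) factors as ε³(γ₁+δ₁+ε)((α+ε)(λ₀+γ₀+δ₀+ε) - αβS/N), i.e., the determinant of (J - εId) equals this expression up to sign, where J is the 6×6 Jacobian evaluated at the equilibrium. -/
open Matrix

/-!
At an equilibrium with `I = 0` the columns of `J` belonging to `S`, `R` and `D` vanish, so
Laplace expansion along them splits off a factor `-ε` each. What remains is the block of
`E`, `I`, `H`, which is lower block triangular: `H` does not feed back into `E` and `I`.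
-/

theorem Matrix.det_eq_mul_det_submatrix_succAbove_of_column_eq_zero {R : Type*} [CommRing R]
    {n : ℕ} (M : Matrix (Fin (n + 1)) (Fin (n + 1)) R) (j : Fin (n + 1))
    (hcol : ∀ i, i ≠ j → M i j = 0) :
    M.det = M j j * (M.submatrix j.succAbove j.succAbove).det := by
  rw [det_succ_column M j, Finset.sum_eq_single j (fun i _ hi => by rw [hcol i hi]; ring)
    (by simp), ← two_mul, pow_mul, neg_one_sq, one_pow, one_mul]

theorem seihrd_jacobian_char_poly_general
    (N β α γ₀ lam₀ δ₀ γ₁ δ₁ S ε : ℝ)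
    (J : Matrix (Fin 6) (Fin 6) ℝ)
    (hJ : J = !![0, 0, -β * S / N, 0, 0, 0;
                 0, -α, β * S / N, 0, 0, 0;
                 0, α, -(lam₀ + γ₀ + δ₀), 0, 0, 0;
                 0, 0, lam₀, -γ₁ - δ₁, 0, 0;
                 0, 0, γ₀, γ₁, 0, 0;
                 0, 0, δ₀, δ₁, 0, 0]) :
    (J - ε • (1 : Matrix (Fin 6) (Fin 6) ℝ)).det
      = ε ^ 3 * (γ₁ + δ₁ + ε) * ((α + ε) * (lam₀ + γ₀ + δ₀ + ε) - α * β * S / N) := by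
  subst hJ
  rw [det_eq_mul_det_submatrix_succAbove_of_column_eq_zero _ 5,
    det_eq_mul_det_submatrix_succAbove_of_column_eq_zero _ 4,
    det_eq_mul_det_submatrix_succAbove_of_column_eq_zero _ 0, det_fin_three]
  · simp [one_apply, Fin.succAbove]
    ring
  all_goals
    intro i hi
    fin_cases i <;> simp_all [one_apply, Fin.succAbove]

/-- The characteristic polynomial of the SEIHRD Jacobian at an equilibrium
factors as `ε³(γ₁+δ₁+ε)((α+ε)(lam₀+γ₀+δ₀+ε) - αβS/N)`. -/
theorem seihrd_jacobian_char_poly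
    (N β α γ₀ lam₀ δ₀ γ₁ δ₁ S ε : ℝ) (hN : 0 < N)
    (hβ : 0 < β) (hα : 0 < α) (hγ₀ : 0 < γ₀) (hlam₀ : 0 < lam₀) (hδ₀ : 0 < δ₀)
    (hγ₁ : 0 < γ₁) (hδ₁ : 0 < δ₁)
    (J : Matrix (Fin 6) (Fin 6) ℝ)
    (hJ : J = !![0, 0, -β * S / N, 0, 0, 0;
                 0, -α, β * S / N, 0, 0, 0;
                 0, α, -(lam₀ + γ₀ + δ₀), 0, 0, 0;
                 0, 0, lam₀, -γ₁ - δ₁, 0, 0;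
                 0, 0, γ₀, γ₁, 0, 0;
                 0, 0, δ₀, δ₁, 0, 0]) :
    (J - ε • (1 : Matrix (Fin 6) (Fin 6) ℝ)).det
      = ε ^ 3 * (γ₁ + δ₁ + ε) * ((α + ε) * (lam₀ + γ₀ + δ₀ + ε) - α * β * S / N) :=
  seihrd_jacobian_char_poly_general N β α γ₀ lam₀ δ₀ γ₁ δ₁ S ε J hJ
end

section
/- In the SEIHRD system with nonnegative initial conditions, all state variables S, E, I, H, R, D remain nonnegative for all t ≥ 0. -/
/-!
The right-hand side of the system is quasi-positive in a quantitative form: on `[0, t]`, where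
`S` and `I` are bounded by some `B`, a variable sitting at `-δ` while all others are `≥ -δ` has
derivative at least `-L δ`, with `L` depending on `B` and the rates. Consequently no coordinate of
`x + ε e^{(L+1)s}` can be the first to reach zero, since at such a time its derivative would be
positive; letting `ε → 0` gives nonnegativity.
-/

open Set Filter Topology Real

theorem HasDerivAt.nonpos_of_eventually_pos_left {y : ℝ → ℝ} {y' τ : ℝ} (hy : HasDerivAt y y' τ)
    (hτ : y τ = 0) (hpos : ∀ᶠ u in 𝓝[<] τ, 0 < y u) : y' ≤ 0 := by
  have hslope : Tendsto (slope y τ) (𝓝[<] τ) (𝓝 y') :=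
    (hasDerivWithinAt_iff_tendsto_slope' (s := Iio τ) (lt_irrefl τ)).1 hy.hasDerivWithinAt
  refine le_of_tendsto hslope ?_
  filter_upwards [hpos, self_mem_nhdsWithin] with u hu hlt
  rw [slope_def_field, hτ, sub_zero]
  exact div_nonpos_of_nonneg_of_nonpos hu.le (sub_nonpos.2 (le_of_lt hlt))

section Quasipositive

variable {ι : Type*} [Finite ι] {x x' : ι → ℝ → ℝ} {a b L : ℝ}

theorem neg_lt_of_quasipositive (hx : ∀ i, ∀ t ∈ Icc a b, HasDerivAt (x i) (x' i t) t)
    (hqp : ∀ t ∈ Icc a b, ∀ δ > 0, (∀ j, -δ ≤ x j t) → ∀ i, x i t = -δ → -(L * δ) ≤ x' i t)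
    (ha : ∀ i, 0 ≤ x i a) {ε : ℝ} (hε : 0 < ε) :
    ∀ i, ∀ t ∈ Icc a b, -(ε * exp ((L + 1) * t)) < x i t := by
  set φ : ℝ → ℝ := fun t => ε * exp ((L + 1) * t)
  have hφ_pos : ∀ t, 0 < φ t := fun t => mul_pos hε (exp_pos _)
  have hφ : ∀ t, HasDerivAt φ ((L + 1) * φ t) t := fun t =>
    (((hasDerivAt_id' t).const_mul (L + 1)).exp.const_mul ε).congr_deriv (by ring)
  have hy : ∀ i, ∀ t ∈ Icc a b,
      HasDerivAt (fun u => x i u + φ u) (x' i t + (L + 1) * φ t) t :=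
    fun i t ht => (hx i t ht).add (hφ t)
  by_contra! hexit
  obtain ⟨i₀, t₀, ht₀, hexit₀⟩ := hexit
  set Z := ⋃ i, Icc a b ∩ (fun u => x i u + φ u) ⁻¹' Iic 0
  have hZ : IsCompact Z := by
    refine isCompact_Icc.of_isClosed_subset (isClosed_iUnion_of_finite fun i => ?_)
      (iUnion_subset fun i => inter_subset_left)
    exact ContinuousOn.preimage_isClosed_of_isClosed
      (fun t ht => (hy i t ht).continuousAt.continuousWithinAt) isClosed_Icc isClosed_Iic
  obtain ⟨τ, hτZ, hτ_least⟩ := hZ.exists_isLeast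
    ⟨t₀, mem_iUnion.2 ⟨i₀, ht₀, show x i₀ t₀ + φ t₀ ≤ 0 by linarith⟩⟩
  obtain ⟨i, hτ, hiτ⟩ := mem_iUnion.1 hτZ
  have hbefore : ∀ j, ∀ u ∈ Ico a τ, 0 < x j u + φ u := by
    intro j u hu
    by_contra! hju
    exact (hτ_least (mem_iUnion.2 ⟨j, ⟨hu.1, hu.2.le.trans hτ.2⟩, hju⟩)).not_gt hu.2
  have hτ_gt : a < τ := by
    refine hτ.1.lt_of_ne fun h => ?_
    have := ha i
    have := hφ_pos a
    simp only [← h, mem_preimage, mem_Iic] at hiτ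
    linarith
  have hleft : ∀ j, ∀ᶠ u in 𝓝[<] τ, 0 < x j u + φ u := fun j =>
    mem_of_superset (Ioo_mem_nhdsLT hτ_gt) fun u hu => hbefore j u ⟨hu.1.le, hu.2⟩
  have hτ_nonneg : ∀ j, 0 ≤ x j τ + φ τ := fun j =>
    ge_of_tendsto ((hy j τ hτ).continuousAt.tendsto.mono_left nhdsWithin_le_nhds)
      ((hleft j).mono fun _ h => h.le)
  have hτ_zero : x i τ + φ τ = 0 := le_antisymm hiτ (hτ_nonneg i)
  have hin := hqp τ hτ (φ τ) (hφ_pos τ) (fun j => by linarith [hτ_nonneg j]) i (by linarith)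
  have hout := (hy i τ hτ).nonpos_of_eventually_pos_left hτ_zero (hleft i)
  nlinarith [hφ_pos τ]

theorem nonneg_of_quasipositive (hx : ∀ i, ∀ t ∈ Icc a b, HasDerivAt (x i) (x' i t) t)
    (hqp : ∀ t ∈ Icc a b, ∀ δ > 0, (∀ j, -δ ≤ x j t) → ∀ i, x i t = -δ → -(L * δ) ≤ x' i t)
    (ha : ∀ i, 0 ≤ x i a) : ∀ i, ∀ t ∈ Icc a b, 0 ≤ x i t := by
  intro i t ht
  by_contra! hneg
  have hε : 0 < -x i t / exp ((L + 1) * t) := div_pos (neg_pos.2 hneg) (exp_pos _)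
  have := neg_lt_of_quasipositive hx hqp ha hε i t ht
  rw [div_mul_cancel₀ _ (exp_pos _).ne'] at this
  linarith

end Quasipositive

theorem neg_mul_le_mul_of_neg_le {x y b δ : ℝ} (hb : 0 ≤ b) (hδ : 0 ≤ δ) (hx : -δ ≤ x)
    (hy : -δ ≤ y) (hxb : x ≤ b) (hyb : y ≤ b) : -(b * δ) ≤ x * y := by
  rcases le_total 0 x with hx0 | hx0 <;> nlinarith

/-- States are ordered `(S, E, I, H, R, D)`. -/
noncomputable def seihrdField (N β α γ₀ lam₀ δ₀ γ₁ δ₁ : ℝ) (y : Fin 6 → ℝ) : Fin 6 → ℝ :=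
  ![-β * y 0 * y 2 / N, β * y 0 * y 2 / N - α * y 1, α * y 1 - (γ₀ + lam₀ + δ₀) * y 2,
    lam₀ * y 2 - (γ₁ + δ₁) * y 3, γ₀ * y 2 + γ₁ * y 3, δ₀ * y 2 + δ₁ * y 3]

theorem seihrdField_quasipositive {N β α γ₀ lam₀ δ₀ γ₁ δ₁ : ℝ} (hN : 0 ≤ N) (hβ : 0 ≤ β)
    (hα : 0 ≤ α) (hγ₀ : 0 ≤ γ₀) (hlam₀ : 0 ≤ lam₀) (hδ₀ : 0 ≤ δ₀) (hγ₁ : 0 ≤ γ₁) (hδ₁ : 0 ≤ δ₁)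
    {y : Fin 6 → ℝ} {δ B : ℝ} (hδ : 0 ≤ δ) (hy : ∀ j, -δ ≤ y j) (hS : |y 0| ≤ B)
    (hI : |y 2| ≤ B) (i : Fin 6) (hi : y i = -δ) :
    -((β / N * B + α + lam₀ + γ₀ + γ₁ + δ₀ + δ₁) * δ) ≤
      seihrdField N β α γ₀ lam₀ δ₀ γ₁ δ₁ y i := by
  have hr : 0 ≤ β / N := div_nonneg hβ hN
  have hB : 0 ≤ B := (abs_nonneg _).trans hS
  have hSI := neg_mul_le_mul_of_neg_le hB hδ (hy 0) (hy 2) (abs_le.1 hS).2 (abs_le.1 hI).2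
  have hlow : ∀ c, 0 ≤ c → ∀ j, c * -δ ≤ c * y j := fun c hc j =>
    mul_le_mul_of_nonneg_left (hy j) hc
  have hrate : ∀ c, 0 ≤ c → 0 ≤ c * δ := fun c hc => mul_nonneg hc hδ
  have := hrate _ hα; have := hrate _ hlam₀; have := hrate _ hγ₀; have := hrate _ hγ₁
  have := hrate _ hδ₀; have := hrate _ hδ₁; have := hrate _ (mul_nonneg hr hB)
  have hβN : ∀ u v, β * u * v / N = β / N * (u * v) := fun u v => by ring
  fin_cases i <;>
    simp only [Fin.zero_eta, Fin.mk_one, Fin.reduceFinMk, Fin.isValue, seihrdField, neg_mul, hβN,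
      Matrix.cons_val_zero, Matrix.cons_val_one, Matrix.cons_val, neg_le_sub_iff_le_add] at hi ⊢
  · rw [neg_div, hβN, hi]
    linarith [mul_nonneg (mul_nonneg hr hδ) (neg_le_iff_add_nonneg.1 (abs_le.1 hI).1)]
  · rw [hi]
    linarith [mul_le_mul_of_nonneg_left hSI hr]
  · rw [hi]
    linarith [hlow α hα 1]
  · rw [hi]
    linarith [hlow lam₀ hlam₀ 2]
  · linarith [hlow γ₀ hγ₀ 2, hlow γ₁ hγ₁ 3]
  · linarith [hlow δ₀ hδ₀ 2, hlow δ₁ hδ₁ 3]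

/-- Nonnegativity of all SEIHRD state variables. -/
theorem seihrd_nonneg_invariant
    (N β α γ₀ lam₀ δ₀ γ₁ δ₁ : ℝ) (hN : 0 < N)
    (hβ : 0 ≤ β) (hα : 0 ≤ α) (hγ₀ : 0 ≤ γ₀) (hlam₀ : 0 ≤ lam₀) (hδ₀ : 0 ≤ δ₀)
    (hγ₁ : 0 ≤ γ₁) (hδ₁ : 0 ≤ δ₁)
    (S E I H R D : ℝ → ℝ)
    (hS : ∀ t ∈ Set.Ici (0 : ℝ), HasDerivAt S (-β * S t * I t / N) t)
    (hE : ∀ t ∈ Set.Ici (0 : ℝ), HasDerivAt E (β * S t * I t / N - α * E t) t)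
    (hI : ∀ t ∈ Set.Ici (0 : ℝ), HasDerivAt I (α * E t - (γ₀ + lam₀ + δ₀) * I t) t)
    (hH : ∀ t ∈ Set.Ici (0 : ℝ), HasDerivAt H (lam₀ * I t - (γ₁ + δ₁) * H t) t)
    (hR : ∀ t ∈ Set.Ici (0 : ℝ), HasDerivAt R (γ₀ * I t + γ₁ * H t) t)
    (hD : ∀ t ∈ Set.Ici (0 : ℝ), HasDerivAt D (δ₀ * I t + δ₁ * H t) t)
    (h0 : 0 ≤ S 0 ∧ 0 ≤ E 0 ∧ 0 ≤ I 0 ∧ 0 ≤ H 0 ∧ 0 ≤ R 0 ∧ 0 ≤ D 0) :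
    ∀ t ∈ Set.Ici (0 : ℝ),
      0 ≤ S t ∧ 0 ≤ E t ∧ 0 ≤ I t ∧ 0 ≤ H t ∧ 0 ≤ R t ∧ 0 ≤ D t := by
  intro t ht
  obtain ⟨B, hB⟩ := isCompact_Icc.exists_bound_of_continuousOn (s := Icc 0 t)
    (ContinuousOn.prodMk (fun s hs => (hS s hs.1).continuousAt.continuousWithinAt)
      (fun s hs => (hI s hs.1).continuousAt.continuousWithinAt))
  set x : Fin 6 → ℝ → ℝ := ![S, E, I, H, R, D]
  have hx : ∀ i, ∀ s ∈ Icc 0 t,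
      HasDerivAt (x i) (seihrdField N β α γ₀ lam₀ δ₀ γ₁ δ₁ (fun j => x j s) i) s := by
    intro i s hs
    fin_cases i
    exacts [hS s hs.1, hE s hs.1, hI s hs.1, hH s hs.1, hR s hs.1, hD s hs.1]
  have hx_nonneg := nonneg_of_quasipositive hx
    (fun s hs δ hδ hxs i hi => seihrdField_quasipositive hN.le hβ hα hγ₀ hlam₀ hδ₀ hγ₁ hδ₁ hδ.le
      hxs ((norm_fst_le _).trans (hB s hs)) ((norm_snd_le _).trans (hB s hs)) i hi)
    (fun i => by fin_cases i <;> simp [x, h0])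
  have := fun i => hx_nonneg i t ⟨ht, le_rfl⟩
  exact ⟨this 0, this 1, this 2, this 3, this 4, this 5⟩
end

section
/- For the SEIR subsystem with constant infection rate β, the quantity V(t) = S(t) - (N/R₀) log S(t) + E(t) + I(t) is nonincreasing along solutions with S, E, I > 0, where R₀ = β/(λ₀+γ₀+δ₀). -/
/-!
Along the flow, `(log S)' = -β I / N`, so `(N / R₀) (log S)' = -c I`. Hence
`V' = S' + c I + E' + I'`, and the three equations sum to `S' + E' + I' = -c I`: the derivative
of `V` vanishes identically. `V` is a first integral of the subsystem, in particular nonincreasing.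
-/

open Set

noncomputable def seirLyapunov (N R₀ : ℝ) (S E I : ℝ → ℝ) (t : ℝ) : ℝ :=
  S t - N / R₀ * Real.log (S t) + E t + I t

theorem hasDerivAt_seirLyapunov {N β α c t : ℝ} {S E I : ℝ → ℝ}
    (hN : N ≠ 0) (hβ : β ≠ 0) (hSt : S t ≠ 0)
    (hS : HasDerivAt S (-β * S t * I t / N) t)
    (hE : HasDerivAt E (β * S t * I t / N - α * E t) t)
    (hI : HasDerivAt I (α * E t - c * I t) t) :
    HasDerivAt (seirLyapunov N (β / c) S E I) 0 t := by
  have hV := ((hS.sub ((hS.log hSt).const_mul (N / (β / c)))).add hE).add hI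
  refine hV.congr_deriv ?_
  field_simp
  ring

theorem seir_lyapunov_nonincreasing_general
    (N β α lam₀ γ₀ δ₀ : ℝ) (hN : 0 < N)
    (hβ : 0 < β)
    (S E I : ℝ → ℝ)
    (hpos : ∀ t ∈ Ici (0 : ℝ), 0 < S t ∧ 0 < E t ∧ 0 < I t)
    (hS : ∀ t ∈ Ici (0 : ℝ), HasDerivAt S (-β * S t * I t / N) t)
    (hE : ∀ t ∈ Ici (0 : ℝ), HasDerivAt E (β * S t * I t / N - α * E t) t)
    (hI : ∀ t ∈ Ici (0 : ℝ),
      HasDerivAt I (α * E t - (lam₀ + γ₀ + δ₀) * I t) t) :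
    AntitoneOn
      (fun t => S t - (N / (β / (lam₀ + γ₀ + δ₀))) * Real.log (S t) + E t + I t)
      (Ici (0 : ℝ)) := by
  have hV (t : ℝ) (ht : t ∈ Ici 0) :
      HasDerivAt (seirLyapunov N (β / (lam₀ + γ₀ + δ₀)) S E I) 0 t :=
    hasDerivAt_seirLyapunov hN.ne' hβ.ne' (hpos t ht).1.ne' (hS t ht) (hE t ht) (hI t ht)
  exact antitoneOn_of_hasDerivWithinAt_nonpos (convex_Ici 0)
    (fun t ht ↦ (hV t ht).continuousAt.continuousWithinAt)
    (fun t ht ↦ (hV t (interior_subset ht)).hasDerivWithinAt) fun _ _ ↦ le_rfl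

/-- The Lyapunov-type quantity `V = S - (N/R₀) log S + E + I` is nonincreasing
along positive SEIR solutions. -/
theorem seir_lyapunov_nonincreasing
    (N β α lam₀ γ₀ δ₀ : ℝ) (hN : 0 < N)
    (hβ : 0 < β) (hα : 0 < α) (hlam₀ : 0 < lam₀) (hγ₀ : 0 < γ₀) (hδ₀ : 0 < δ₀)
    (S E I : ℝ → ℝ)
    (hpos : ∀ t ∈ Ici (0 : ℝ), 0 < S t ∧ 0 < E t ∧ 0 < I t)
    (hS : ∀ t ∈ Ici (0 : ℝ), HasDerivAt S (-β * S t * I t / N) t)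
    (hE : ∀ t ∈ Ici (0 : ℝ), HasDerivAt E (β * S t * I t / N - α * E t) t)
    (hI : ∀ t ∈ Ici (0 : ℝ),
      HasDerivAt I (α * E t - (lam₀ + γ₀ + δ₀) * I t) t) :
    AntitoneOn
      (fun t => S t - (N / (β / (lam₀ + γ₀ + δ₀))) * Real.log (S t) + E t + I t)
      (Ici (0 : ℝ)) :=
  seir_lyapunov_nonincreasing_general N β α lam₀ γ₀ δ₀ hN hβ S E I hpos hS hE hI
end

section
/- For the SEIR subsystem with constant β, the limit S_∞ = lim_{t→∞} S(t) exists and satisfies S_∞ ≤ N/R₀ whenever E(0) + I(0) > 0 and R₀ > 1, where R₀ = β/(λ₀+γ₀+δ₀). More precisely, if S(t) > N/R₀ for all t in an interval where I stays positive, then S+E+I is strictly decreasing there; the final susceptible fraction cannot exceed N/R₀. -/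
/-!
If `S` stayed above `N / R₀`, every new exposure would outweigh the removals, so `E + I`
could never decrease and would stay at least `E 0 + I 0 > 0`. A weighted sum `I + k E` with
`c / (β S_∞ / N) < k < 1` then grows at a rate proportional to `E + I`, hence at least linearly,
while it is bounded by the nonincreasing total population `S + E + I`.
-/

open Set Filter Topology

lemma monotoneOn_of_hasDerivAt_nonneg {D : Set ℝ} (hD : Convex ℝ D) {f f' : ℝ → ℝ}
    (hf : ∀ x ∈ D, HasDerivAt f (f' x) x) (hf' : ∀ x ∈ D, 0 ≤ f' x) : MonotoneOn f D :=
  monotoneOn_of_hasDerivWithinAt_nonneg hD (fun x hx ↦ (hf x hx).continuousAt.continuousWithinAt)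
    (fun x hx ↦ (hf x (interior_subset hx)).hasDerivWithinAt)
    (fun x hx ↦ hf' x (interior_subset hx))

lemma antitoneOn_of_hasDerivAt_nonpos {D : Set ℝ} (hD : Convex ℝ D) {f f' : ℝ → ℝ}
    (hf : ∀ x ∈ D, HasDerivAt f (f' x) x) (hf' : ∀ x ∈ D, f' x ≤ 0) : AntitoneOn f D := by
  simpa using (monotoneOn_of_hasDerivAt_nonneg hD (fun x hx ↦ (hf x hx).neg)
    (fun x hx ↦ neg_nonneg.mpr (hf' x hx))).neg

lemma add_mul_sub_le_of_hasDerivAt_ge {f f' : ℝ → ℝ} {a m : ℝ}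
    (hf : ∀ x ∈ Ici a, HasDerivAt f (f' x) x) (hm : ∀ x ∈ Ici a, m ≤ f' x)
    {t : ℝ} (ht : a ≤ t) : f a + m * (t - a) ≤ f t := by
  have hmono : MonotoneOn (fun x ↦ f x - m * x) (Ici a) :=
    monotoneOn_of_hasDerivAt_nonneg (convex_Ici a)
      (fun x hx ↦ (hf x hx).sub ((hasDerivAt_id x).const_mul m)) (fun x hx ↦ by simpa using hm x hx)
  have := hmono self_mem_Ici ht ht
  linarith

lemma AntitoneOn.exists_tendsto_atTop {f : ℝ → ℝ} {a : ℝ} (hf : AntitoneOn f (Ici a))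
    (hb : BddBelow (f '' Ici a)) : ∃ l, Tendsto f atTop (𝓝 l) ∧ ∀ t ∈ Ici a, l ≤ f t := by
  set g : ℝ → ℝ := fun t ↦ f (max t a)
  have hg : Antitone g := fun s t hst ↦
    hf (le_max_right s a) (le_max_right t a) (max_le_max hst le_rfl)
  have hgb : BddBelow (range g) :=
    hb.mono (range_subset_iff.mpr fun t ↦ mem_image_of_mem f (le_max_right t a))
  refine ⟨⨅ t, g t, (tendsto_atTop_ciInf hg hgb).congr' ?_, fun t ht ↦ ?_⟩
  · filter_upwards [eventually_ge_atTop a] with t ht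
    simp [g, max_eq_left ht]
  · simpa [g, max_eq_left (mem_Ici.mp ht)] using ciInf_le hgb t

namespace SEIR

variable {N β α c : ℝ} {S E I : ℝ → ℝ}

lemma antitoneOn_S (hN : 0 < N) (hβ : 0 ≤ β)
    (hnn : ∀ t ∈ Ici (0 : ℝ), 0 ≤ S t ∧ 0 ≤ E t ∧ 0 ≤ I t)
    (hS : ∀ t ∈ Ici (0 : ℝ), HasDerivAt S (-β * S t * I t / N) t) :
    AntitoneOn S (Ici 0) :=
  antitoneOn_of_hasDerivAt_nonpos (convex_Ici 0) hS fun t ht ↦ by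
    obtain ⟨hSt, -, hIt⟩ := hnn t ht
    rw [neg_mul, neg_mul, neg_div, neg_nonpos]
    exact div_nonneg (mul_nonneg (mul_nonneg hβ hSt) hIt) hN.le

lemma E_add_I_le_total (hc : 0 ≤ c)
    (hnn : ∀ t ∈ Ici (0 : ℝ), 0 ≤ S t ∧ 0 ≤ E t ∧ 0 ≤ I t)
    (hS : ∀ t ∈ Ici (0 : ℝ), HasDerivAt S (-β * S t * I t / N) t)
    (hE : ∀ t ∈ Ici (0 : ℝ), HasDerivAt E (β * S t * I t / N - α * E t) t)
    (hI : ∀ t ∈ Ici (0 : ℝ), HasDerivAt I (α * E t - c * I t) t)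
    {t : ℝ} (ht : 0 ≤ t) : E t + I t ≤ S 0 + E 0 + I 0 := by
  have hderiv : ∀ t ∈ Ici (0 : ℝ), HasDerivAt (fun t ↦ S t + E t + I t) (-c * I t) t :=
    fun t ht ↦ (((hS t ht).add (hE t ht)).add (hI t ht)).congr_deriv (by ring)
  have htotal := antitoneOn_of_hasDerivAt_nonpos (convex_Ici 0) hderiv
    (fun t ht ↦ by nlinarith [(hnn t ht).2.2]) self_mem_Ici ht ht
  linarith [(hnn t ht).1]

lemma monotoneOn_E_add_I (hSc : ∀ t ∈ Ici (0 : ℝ), c ≤ β * S t / N)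
    (hnn : ∀ t ∈ Ici (0 : ℝ), 0 ≤ S t ∧ 0 ≤ E t ∧ 0 ≤ I t)
    (hE : ∀ t ∈ Ici (0 : ℝ), HasDerivAt E (β * S t * I t / N - α * E t) t)
    (hI : ∀ t ∈ Ici (0 : ℝ), HasDerivAt I (α * E t - c * I t) t) :
    MonotoneOn (fun t ↦ E t + I t) (Ici 0) :=
  monotoneOn_of_hasDerivAt_nonneg (convex_Ici 0) (fun t ht ↦ (hE t ht).add (hI t ht))
    fun t ht ↦ by
      have key : β * S t * I t / N - α * E t + (α * E t - c * I t) = (β * S t / N - c) * I t := by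
        ring
      rw [key]
      exact mul_nonneg (sub_nonneg.mpr (hSc t ht)) (hnn t ht).2.2

lemma min_mul_add_le_deriv_I_add_mul_E {a k x y z : ℝ} (ha : a ≤ β * x / N) (hk : 0 ≤ k)
    (hy : 0 ≤ y) (hz : 0 ≤ z) :
    min (k * a - c) (α * (1 - k)) * (y + z) ≤ α * y - c * z + k * (β * x * z / N - α * y) :=
  calc min (k * a - c) (α * (1 - k)) * (y + z) ≤ (k * a - c) * z + α * (1 - k) * y := by
        nlinarith [min_le_left (k * a - c) (α * (1 - k)), min_le_right (k * a - c) (α * (1 - k))]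
    _ ≤ (k * (β * x / N) - c) * z + α * (1 - k) * y := by gcongr
    _ = α * y - c * z + k * (β * x * z / N - α * y) := by ring

lemma exists_S_lt {s : ℝ} (hN : 0 < N) (hα : 0 < α) (hβ : 0 ≤ β) (hc : 0 ≤ c)
    (hnn : ∀ t ∈ Ici (0 : ℝ), 0 ≤ S t ∧ 0 ≤ E t ∧ 0 ≤ I t)
    (hS : ∀ t ∈ Ici (0 : ℝ), HasDerivAt S (-β * S t * I t / N) t)
    (hE : ∀ t ∈ Ici (0 : ℝ), HasDerivAt E (β * S t * I t / N - α * E t) t)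
    (hI : ∀ t ∈ Ici (0 : ℝ), HasDerivAt I (α * E t - c * I t) t)
    (hEI0 : 0 < E 0 + I 0) (hs : c < β * s / N) : ∃ t ∈ Ici (0 : ℝ), S t < s := by
  by_contra! hsS
  set a := β * s / N
  have ha : ∀ t ∈ Ici (0 : ℝ), a ≤ β * S t / N := fun t ht ↦ by
    have := hsS t ht
    unfold a; gcongr
  have hEI : ∀ t ∈ Ici (0 : ℝ), E 0 + I 0 ≤ E t + I t := fun t ht ↦
    monotoneOn_E_add_I (fun t ht ↦ hs.le.trans (ha t ht)) hnn hE hI self_mem_Ici ht ht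
  obtain ⟨k, hck, hk1⟩ := exists_between ((div_lt_one (hc.trans_lt hs)).mpr hs)
  have hka : c < k * a := (div_lt_iff₀ (hc.trans_lt hs)).mp hck
  have hk0 : 0 ≤ k := (div_nonneg hc (hc.trans_lt hs).le).trans hck.le
  set δ := min (k * a - c) (α * (1 - k))
  have hδ : 0 < δ := lt_min (by linarith) (mul_pos hα (by linarith))
  have hW : ∀ t ∈ Ici (0 : ℝ), HasDerivAt (fun t ↦ I t + k * E t)
      (α * E t - c * I t + k * (β * S t * I t / N - α * E t)) t :=
    fun t ht ↦ (hI t ht).add ((hE t ht).const_mul k)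
  have hW' : ∀ t ∈ Ici (0 : ℝ),
      δ * (E 0 + I 0) ≤ α * E t - c * I t + k * (β * S t * I t / N - α * E t) := fun t ht ↦
    (mul_le_mul_of_nonneg_left (hEI t ht) hδ.le).trans
      (min_mul_add_le_deriv_I_add_mul_E (ha t ht) hk0 (hnn t ht).2.1 (hnn t ht).2.2)
  set T := (S 0 + E 0 + I 0 + 1) / (δ * (E 0 + I 0))
  have hT : 0 ≤ T := div_nonneg (by linarith [(hnn 0 self_mem_Ici).1]) (by positivity)
  have hgrowth := add_mul_sub_le_of_hasDerivAt_ge hW hW' hT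
  have hbound := E_add_I_le_total hc hnn hS hE hI hT
  have hδT : δ * (E 0 + I 0) * (T - 0) = S 0 + E 0 + I 0 + 1 := by
    rw [sub_zero]; exact mul_div_cancel₀ _ (by positivity)
  obtain ⟨-, hE0, hI0⟩ := hnn 0 self_mem_Ici
  obtain ⟨-, hET, -⟩ := hnn T hT
  linarith [mul_nonneg hk0 hE0, mul_nonneg (sub_nonneg.mpr hk1.le) hET]

end SEIR

theorem seir_final_size_bound_general
    (N β α lam₀ γ₀ δ₀ : ℝ) (hN : 0 < N)
    (hβ : 0 < β) (hα : 0 < α)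
    (hR₀ : β / (lam₀ + γ₀ + δ₀) > 1)
    (S E I : ℝ → ℝ)
    (hnn : ∀ t ∈ Ici (0 : ℝ), 0 ≤ S t ∧ 0 ≤ E t ∧ 0 ≤ I t)
    (hEI0 : 0 < E 0 + I 0)
    (hS : ∀ t ∈ Ici (0 : ℝ), HasDerivAt S (-β * S t * I t / N) t)
    (hE : ∀ t ∈ Ici (0 : ℝ), HasDerivAt E (β * S t * I t / N - α * E t) t)
    (hI : ∀ t ∈ Ici (0 : ℝ),
      HasDerivAt I (α * E t - (lam₀ + γ₀ + δ₀) * I t) t) :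
    ∃ Sinf : ℝ, Tendsto S atTop (𝓝 Sinf) ∧
      Sinf ≤ N / (β / (lam₀ + γ₀ + δ₀)) := by
  have hc : 0 < lam₀ + γ₀ + δ₀ :=
    ((one_lt_div_iff.mp hR₀).resolve_right fun h ↦ by linarith [h.2]).1
  obtain ⟨Sinf, hlim, hle⟩ := (SEIR.antitoneOn_S hN hβ.le hnn hS).exists_tendsto_atTop
    ⟨0, by rintro _ ⟨t, ht, rfl⟩; exact (hnn t ht).1⟩
  refine ⟨Sinf, hlim, le_of_not_gt fun h ↦ ?_⟩
  have hSinf : lam₀ + γ₀ + δ₀ < β * Sinf / N := by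
    rw [div_div_eq_mul_div, div_lt_iff₀ hβ] at h
    rw [lt_div_iff₀ hN]
    linarith
  obtain ⟨t, ht, hlt⟩ := SEIR.exists_S_lt hN hα hβ.le hc.le hnn hS hE hI hEI0 hSinf
  exact (hle t ht).not_gt hlt

/-- The limit `S_∞` of the susceptible population exists and satisfies
`S_∞ ≤ N / R₀` for the SEIR subsystem with `R₀ > 1`. -/
theorem seir_final_size_bound
    (N β α lam₀ γ₀ δ₀ : ℝ) (hN : 0 < N)
    (hβ : 0 < β) (hα : 0 < α) (hlam₀ : 0 < lam₀) (hγ₀ : 0 < γ₀) (hδ₀ : 0 < δ₀)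
    (hR₀ : β / (lam₀ + γ₀ + δ₀) > 1)
    (S E I : ℝ → ℝ)
    (hnn : ∀ t ∈ Ici (0 : ℝ), 0 ≤ S t ∧ 0 ≤ E t ∧ 0 ≤ I t)
    (hS0 : 0 < S 0) (hEI0 : 0 < E 0 + I 0)
    (hS : ∀ t ∈ Ici (0 : ℝ), HasDerivAt S (-β * S t * I t / N) t)
    (hE : ∀ t ∈ Ici (0 : ℝ), HasDerivAt E (β * S t * I t / N - α * E t) t)
    (hI : ∀ t ∈ Ici (0 : ℝ),
      HasDerivAt I (α * E t - (lam₀ + γ₀ + δ₀) * I t) t) :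
    ∃ Sinf : ℝ, Tendsto S atTop (𝓝 Sinf) ∧
      Sinf ≤ N / (β / (lam₀ + γ₀ + δ₀)) :=
  seir_final_size_bound_general N β α lam₀ γ₀ δ₀ hN hβ hα hR₀ S E I hnn hEI0 hS hE hI
end

section
/- If the effective reproduction number satisfies β(t) S(t)/N ≤ (1-ε)(λ₀+γ₀+δ₀) for all t ≥ 0 with ε ∈ (0,1), then in the SEIR subsystem the quantity E(t) + I(t) decays exponentially: there exist constants C, r > 0 with E(t)+I(t) ≤ C e^{-rt}(E(0)+I(0)). -/
open Set Real

/-!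
With `c = λ₀ + γ₀ + δ₀` and `θ = 1 - ε / 2`, the Lyapunov function `V = E + θ I` satisfies
`V' ≤ (1 - ε) c I - (ε / 2) α E - θ c I = -(ε / 2) (α E + c I) ≤ -r V` for
`r = min (α ε / 2) (ε c / 2)`, because the new infections `β S I / N` are at most `(1 - ε) c I`.
Grönwall gives `V t ≤ V 0 e^{-r t}`, and `θ (E + I) ≤ V ≤ E + I` turns this into the claim
with `C = 1 / θ`.
-/

theorem le_mul_exp_of_hasDerivAt_le_neg_mul {f f' : ℝ → ℝ} {a r : ℝ}
    (hf : ∀ t ∈ Ici a, HasDerivAt f (f' t) t) (hbound : ∀ t ∈ Ici a, f' t ≤ -r * f t) :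
    ∀ t ∈ Ici a, f t ≤ f a * exp (-r * (t - a)) := by
  intro t ht
  have hcont : ContinuousOn f (Icc a t) := fun x hx =>
    (hf x hx.1).continuousAt.continuousWithinAt
  have := le_gronwallBound_of_liminf_deriv_right_le (K := -r) (ε := 0) hcont
    (fun x hx _ hr => (hf x hx.1).hasDerivWithinAt.liminf_right_slope_le hr) le_rfl
    (fun x hx => (add_zero (-r * f x)).symm ▸ hbound x hx.1) t ⟨ht, le_rfl⟩
  rwa [gronwallBound_ε0] at this

theorem mul_div_le_of_le_mul {b k N I : ℝ} (hN : 0 < N) (hI : 0 ≤ I) (h : b ≤ k * N) :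
    b * I / N ≤ k * I := by
  rw [div_le_iff₀ hN]
  nlinarith

theorem seir_lyapunov_deriv_le {α c ε r E I x : ℝ} (hε : 0 ≤ ε) (hr : 0 ≤ r)
    (hrα : r ≤ α * ε / 2) (hrc : r ≤ ε * c / 2) (hE : 0 ≤ E) (hI : 0 ≤ I)
    (hx : x ≤ (1 - ε) * c * I) :
    x - α * E + (1 - ε / 2) * (α * E - c * I) ≤ -r * (E + (1 - ε / 2) * I) := by
  nlinarith [mul_le_mul_of_nonneg_right hrα hE, mul_le_mul_of_nonneg_right hrc hI,
    mul_nonneg (mul_nonneg hr hε) hI]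

theorem seir_exponential_decay_general
    (N α lam₀ γ₀ δ₀ ε : ℝ) (hN : 0 < N)
    (hα : 0 < α) (hlam₀ : 0 < lam₀) (hγ₀ : 0 < γ₀) (hδ₀ : 0 < δ₀)
    (hε : ε ∈ Ioo (0 : ℝ) 1)
    (β : ℝ → ℝ)
    (S E I : ℝ → ℝ)
    (hnn : ∀ t ∈ Ici (0 : ℝ), 0 ≤ S t ∧ 0 ≤ E t ∧ 0 ≤ I t)
    (hE : ∀ t ∈ Ici (0 : ℝ), HasDerivAt E (β t * S t * I t / N - α * E t) t)
    (hI : ∀ t ∈ Ici (0 : ℝ),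
      HasDerivAt I (α * E t - (lam₀ + γ₀ + δ₀) * I t) t)
    (hRe : ∀ t ∈ Ici (0 : ℝ), β t * S t ≤ (1 - ε) * (lam₀ + γ₀ + δ₀) * N) :
    ∃ C > (0 : ℝ), ∃ r > (0 : ℝ), ∀ t ∈ Ici (0 : ℝ),
      E t + I t ≤ C * Real.exp (-r * t) * (E 0 + I 0) := by
  obtain ⟨hε0, hε1⟩ := hε
  have hc : 0 < lam₀ + γ₀ + δ₀ := by positivity
  have hθ : 0 < 1 - ε / 2 := by linarith
  have hθ1 : 1 - ε / 2 ≤ 1 := by linarith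
  set c := lam₀ + γ₀ + δ₀
  set θ := 1 - ε / 2
  set r := min (α * ε / 2) (ε * c / 2)
  have hr : 0 < r := lt_min (by positivity) (by positivity)
  have hV : ∀ t ∈ Ici (0 : ℝ), E t + θ * I t ≤ (E 0 + θ * I 0) * exp (-r * (t - 0)) :=
    le_mul_exp_of_hasDerivAt_le_neg_mul (fun t ht => (hE t ht).add ((hI t ht).const_mul θ))
      fun t ht => seir_lyapunov_deriv_le hε0.le hr.le (min_le_left _ _) (min_le_right _ _)
        (hnn t ht).2.1 (hnn t ht).2.2 (mul_div_le_of_le_mul hN (hnn t ht).2.2 (hRe t ht))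
  refine ⟨1 / θ, by positivity, r, hr, fun t ht => ?_⟩
  obtain ⟨-, hEt, -⟩ := hnn t ht
  obtain ⟨-, -, hI0⟩ := hnn 0 self_mem_Ici
  rw [mul_assoc, one_div_mul_eq_div, le_div_iff₀ hθ]
  calc (E t + I t) * θ ≤ E t + θ * I t := by nlinarith [mul_le_mul_of_nonneg_right hθ1 hEt]
    _ ≤ (E 0 + θ * I 0) * exp (-r * t) := by simpa only [sub_zero] using hV t ht
    _ ≤ exp (-r * t) * (E 0 + I 0) := by
      rw [mul_comm]
      gcongr
      exact mul_le_of_le_one_left hI0 hθ1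

/-- If the effective reproduction number stays below `1 - ε`, then `E + I`
decays exponentially. -/
theorem seir_exponential_decay
    (N α lam₀ γ₀ δ₀ ε : ℝ) (hN : 0 < N)
    (hα : 0 < α) (hlam₀ : 0 < lam₀) (hγ₀ : 0 < γ₀) (hδ₀ : 0 < δ₀)
    (hε : ε ∈ Ioo (0 : ℝ) 1)
    (β : ℝ → ℝ) (hβc : Continuous β) (hβ : ∀ t, 0 ≤ β t)
    (S E I : ℝ → ℝ)
    (hnn : ∀ t ∈ Ici (0 : ℝ), 0 ≤ S t ∧ 0 ≤ E t ∧ 0 ≤ I t)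
    (hS : ∀ t ∈ Ici (0 : ℝ), HasDerivAt S (-β t * S t * I t / N) t)
    (hE : ∀ t ∈ Ici (0 : ℝ), HasDerivAt E (β t * S t * I t / N - α * E t) t)
    (hI : ∀ t ∈ Ici (0 : ℝ),
      HasDerivAt I (α * E t - (lam₀ + γ₀ + δ₀) * I t) t)
    (hRe : ∀ t ∈ Ici (0 : ℝ), β t * S t ≤ (1 - ε) * (lam₀ + γ₀ + δ₀) * N) :
    ∃ C > (0 : ℝ), ∃ r > (0 : ℝ), ∀ t ∈ Ici (0 : ℝ),
      E t + I t ≤ C * Real.exp (-r * t) * (E 0 + I 0) :=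
  seir_exponential_decay_general N α lam₀ γ₀ δ₀ ε hN hα hlam₀ hγ₀ hδ₀ hε β S E I hnn hE hI hRe
end

section
/- For the Hamiltonian maximization in the Pontryagin condition, the maximizer of β ↦ β·S·(I/N)·(P_E - P_S) - L(β) over β ∈ (0,∞), where L(β) = Nk(-log(β/b) + β/b - 1), is unique and given explicitly by β* = b / (1 - (b S I (P_E - P_S))/(N² k)) whenever S I (P_E - P_S) < N² k / b, and β* is strictly less than b exactly when P_E < P_S. -/
open Set Real

/-!
On `(0, ∞)` the Hamiltonian is `Nk log β - m β` plus a constant, where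
`m = Nk/b - SI(P_E - P_S)/N` is positive exactly under the hypothesis on the costates.
Such a function has the strict maximizer `β* = Nk/m`: with `y = β/β*`, its gap to the value
at `β*` is `Nk (log y - (y - 1))`, negative unless `y = 1`. Finally
`b - β* = β* · bSI(P_S - P_E)/(N²k)` gives the comparison with `b`.
-/

lemma mul_log_sub_mul_lt_of_ne {a m x : ℝ} (ha : 0 < a) (hm : 0 < m) (hx : 0 < x)
    (hne : x ≠ a / m) :
    a * log x - m * x < a * log (a / m) - m * (a / m) := by
  have hy : 0 < m * x / a := by positivity
  have hy_ne : m * x / a ≠ 1 := by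
    rw [Ne, div_eq_one_iff_eq ha.ne']
    contrapose! hne
    rw [eq_div_iff hm.ne']
    linarith
  have hsplit : log x = log (a / m) + log (m * x / a) := by
    rw [← log_mul (by positivity) hy.ne']
    field_simp
  have hlog : a * log (m * x / a) < m * x - a :=
    calc a * log (m * x / a) < a * (m * x / a - 1) :=
          mul_lt_mul_of_pos_left (log_lt_sub_one_of_pos hy hy_ne) ha
      _ = m * x - a := by field_simp
  rw [hsplit, mul_div_cancel₀ a hm.ne']
  linarith

/-- The unique maximizer of the Hamiltonian in `β` is
`β* = b / (1 - bSI(P_E - P_S)/(N²k))`, and `β* < b` iff `P_E < P_S`. -/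
theorem hamiltonian_maximizer
    (N k b S I PS PE : ℝ) (hN : 0 < N) (hk : 0 < k) (hb : 0 < b)
    (hS : 0 < S) (hI : 0 < I)
    (hcond : S * I * (PE - PS) < N ^ 2 * k / b)
    (g : ℝ → ℝ)
    (hg : ∀ β, g β = β * S * (I / N) * (PE - PS)
      - N * k * (-Real.log (β / b) + β / b - 1))
    (βstar : ℝ)
    (hβstar : βstar = b / (1 - b * S * I * (PE - PS) / (N ^ 2 * k))) :
    0 < βstar ∧
    (∀ β ∈ Ioi (0 : ℝ), β ≠ βstar → g β < g βstar) ∧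
    (βstar < b ↔ PE < PS) := by
  set D := 1 - b * S * I * (PE - PS) / (N ^ 2 * k) with hD_def
  have hD : 0 < D := by
    rw [hD_def, sub_pos, div_lt_one (by positivity)]
    have := (lt_div_iff₀ hb).mp hcond
    linarith
  have hβpos : 0 < βstar := hβstar ▸ div_pos hb hD
  have hm : 0 < N * k * D / b := by positivity
  have hg_log : ∀ β > 0, g β = N * k * log β - N * k * D / b * β + N * k * (1 - log b) := by
    intro β hβ
    rw [hg, log_div hβ.ne' hb.ne', hD_def]
    field_simp
    ring
  have hβstar_eq : βstar = N * k / (N * k * D / b) := by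
    rw [hβstar]
    field_simp
  refine ⟨hβpos, fun β hβ hne => ?_, ?_⟩
  · rw [hg_log β hβ, hg_log βstar hβpos, hβstar_eq]
    rw [hβstar_eq] at hne
    linarith [mul_log_sub_mul_lt_of_ne (by positivity) hm hβ hne]
  · have hβD : βstar * D = b := by
      rw [hβstar]
      field_simp
    have hdiff : b - βstar = βstar * (b * S * I / (N ^ 2 * k)) * (PS - PE) := by
      linear_combination -hβD + βstar * hD_def
    calc βstar < b ↔ 0 < b - βstar := sub_pos.symm
      _ ↔ 0 < βstar * (b * S * I / (N ^ 2 * k)) * (PS - PE) := by rw [hdiff]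
      _ ↔ 0 < PS - PE := mul_pos_iff_of_pos_left (by positivity)
      _ ↔ PE < PS := sub_pos
end
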